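/- Let λ ∈ ℤ^{r+1} be dominant (λ_1 ≥ … ≥ λ_{r+1}) and effective (λ_{r+1} ≥ 0), let ρ = (r, r−1, …, 1, 0), and let μ = (μ_1,…,μ_r) ∈ ℤ^r interleave with λ+ρ, i.e. (λ+ρ)_j ≥ μ_j ≥ (λ+ρ)_{j+1} for 1 ≤ j ≤ r. Let T be any Gelfand–Tsetlin pattern of rank r with top row λ+ρ and second row μ, let T′ be the rank-(r−1) pattern with top row μ obtained by deleting the top row of T, and let T* be the rank-r pattern with top row λ+ρ and entries a_{i,j} = μ_j for all 1 ≤ i ≤ j ≤ r. Then: (a) wt(T) = (wt(T′), d(λ+ρ) − d(μ)), where d(·) denotes the sum of the coordinates and wt(T′) is the weight of T′ as a rank-(r−1) pattern; (b) G^{(n)}(T) = G^{(n)}(T′)·G^{(n)}(T*), where G^{(n)}(T′) is the degree-n Gelfand–Tsetlin coefficient of the rank-(r−1) pattern T′. -/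

import Mathlib

/-!
Only the top two rows of a pattern enter the first row of its Γ-array, and the other rows of the
Γ-array of `T` are those of `T'`. Hence `G⁽ⁿ⁾(T)` is the product of the first-row factors, which
`T` and `T*` share, and `G⁽ⁿ⁾(T')`; likewise for `T*`, whose truncation has all rows equal to `μ`.
That truncation has vanishing Γ-array, so it contributes `1` when `μ` is strictly decreasing. If
`μ` repeats an entry, interleaving pins the entry of `T` below the repeat, making a factor of
`G⁽ⁿ⁾(T')` zero.
-/

open scoped BigOperators Classical

noncomputable section

namespace MetaPaper

variable (F : Type) [Field F]

/-- The field of rational functions in `x_1, …, x_{r+1}` over `F`. -/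
abbrev K (r : ℕ) : Type := FractionRing (MvPolynomial (Fin (r+1)) F)

variable (r : ℕ)

/-- The variable `x_i` as an element of `K`. -/
def XX (i : Fin (r+1)) : K F r :=
  algebraMap (MvPolynomial (Fin (r+1)) F) (K F r) (MvPolynomial.X i)

/-- A constant from `F` as an element of `K`. -/
def CC (c : F) : K F r :=
  algebraMap (MvPolynomial (Fin (r+1)) F) (K F r) (MvPolynomial.C c)

/-- The monomial `x^λ = x_1^{λ_1} ⋯ x_{r+1}^{λ_{r+1}}`. -/
def mon (lam : Fin (r+1) → ℤ) : K F r := ∏ i, XX F r i ^ lam i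

open Fin.NatCast in
/-- The simple reflection `σ_{i+1}` (0-indexed: swapping coordinates `i` and `i+1`). -/
def sref (i : ℕ) : Equiv.Perm (Fin (r+1)) :=
  Equiv.swap ((i : Fin (r+1))) (((i+1 : ℕ) : Fin (r+1)))

/-- The product of the simple reflections indexed by a word. -/
def wordProd (l : List ℕ) : Equiv.Perm (Fin (r+1)) := (l.map (sref r)).prod

/-- The (Coxeter) length of a permutation: the least length of a word in the
simple reflections representing it. -/
def plen (u : Equiv.Perm (Fin (r+1))) : ℕ :=
  sInf {m | ∃ l : List ℕ, (∀ i ∈ l, i < r) ∧ l.length = m ∧ wordProd r l = u}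

/-- The strong Bruhat order: `u ≤ w` iff `u` is the product of a subword of a
reduced word for `w`. -/
def BruhatLE (u w : Equiv.Perm (Fin (r+1))) : Prop :=
  ∃ l : List ℕ, (∀ i ∈ l, i < r) ∧ wordProd r l = w ∧ l.length = plen r w ∧
    ∃ l' : List ℕ, l'.Sublist l ∧ wordProd r l' = u

/-- The favourite reduced word `σ_1, σ_2 σ_1, σ_3 σ_2 σ_1, …` (0-indexed) for the
longest element of `S_{m+1}`. -/
def favWord (m : ℕ) : List ℕ := (List.range m).flatMap (fun b => (List.range (b+1)).reverse)

open Fin.NatCast in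
/-- `x^{α_i} = x_i / x_{i+1}` (0-indexed `i`). -/
def xalpha (i : ℕ) : K F r := XX F r (i : Fin (r+1)) / XX F r ((i+1 : ℕ) : Fin (r+1))

/-- The sublattice `Λ₀` of exponent vectors whose coordinates are all congruent mod `n`. -/
def Lam0 (n : ℕ) : Set (Fin (r+1) → ℤ) := {lam | ∀ i j, (n : ℤ) ∣ lam i - lam j}

/-- The subfield `K₀` of `K` generated by the monomials `x^λ` with `λ ∈ Λ₀`. -/
def K0 (n : ℕ) : Subfield (K F r) :=
  Subfield.closure {x | ∃ lam ∈ Lam0 r n, x = mon F r lam}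

variable (n : ℕ) (v : F) (g : ℤ → F)

open Fin.NatCast in
/-- Data of the metaplectic (Chinta–Gunnells) action of `W = S_{r+1}` on `K`,
together with the ordinary permutation action, and their defining properties. -/
structure Setup : Type where
  /-- the Chinta–Gunnells action -/
  act : Equiv.Perm (Fin (r+1)) → K F r → K F r
  /-- the ordinary permutation action on `K` -/
  perm : Equiv.Perm (Fin (r+1)) → K F r ≃+* K F r
  perm_X : ∀ w i, perm w (XX F r i) = XX F r (w i)
  perm_const : ∀ w c, perm w (CC F r c) = CC F r c
  perm_one : ∀ f, perm 1 f = f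
  perm_mul : ∀ u w f, perm (u * w) f = perm u (perm w f)
  act_one : ∀ f, act 1 f = f
  act_mul : ∀ u w f, act (u * w) f = act u (act w f)
  act_add : ∀ w f h, act w (f + h) = act w f + act w h
  act_const_mul : ∀ w c f, act w (CC F r c * f) = CC F r c * act w f
  act_simple : ∀ i : ℕ, i < r → ∀ lam : Fin (r+1) → ℤ,
    act (sref r i) (mon F r lam) =
      mon F r (fun j => lam (sref r i j)) / (1 - CC F r v * xalpha F r i ^ (n : ℕ)) *
        (xalpha F r i ^ (-((lam (((i+1 : ℕ) : Fin (r+1))) - lam ((i : Fin (r+1)))) % (n : ℤ)))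
            * (1 - CC F r v)
          - CC F r v * CC F r (g (1 + lam (((i+1 : ℕ) : Fin (r+1))) - lam ((i : Fin (r+1)))))
            * xalpha F r i ^ (1 - (n : ℤ)) * (1 - xalpha F r i ^ (n : ℕ)))
  act_K0 : ∀ i : ℕ, i < r → ∀ h f : K F r, h ∈ K0 F r n →
    act (sref r i) (h * f) = perm (sref r i) h * act (sref r i) f

variable {F r n v g}

/-- The metaplectic Demazure operator `D_i`. -/
def Dem (S : Setup F r n v g) (i : ℕ) (f : K F r) : K F r :=
  (f - xalpha F r i ^ (n : ℕ) * S.act (sref r i) f) / (1 - xalpha F r i ^ (n : ℕ))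

/-- The metaplectic Demazure–Lusztig operator `T_i`. -/
def DL (S : Setup F r n v g) (i : ℕ) (f : K F r) : K F r :=
  (1 - CC F r v * xalpha F r i ^ (n : ℕ)) * Dem S i f - f

/-- `D_{i_1} ⋯ D_{i_l}` for a word `[i_1, …, i_l]`. -/
def DWord (S : Setup F r n v g) : List ℕ → K F r → K F r
  | [] => fun f => f
  | i :: l => fun f => Dem S i (DWord S l f)

/-- `T_{i_1} ⋯ T_{i_l}` for a word `[i_1, …, i_l]`. -/
def TWord (S : Setup F r n v g) : List ℕ → K F r → K F r
  | [] => fun f => f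
  | i :: l => fun f => DL S i (TWord S l f)

/-- `D_u` for `u ∈ W`, via a chosen reduced word for `u` (by the braid relations
this does not depend on the choice). -/
def Dperm (S : Setup F r n v g) (u : Equiv.Perm (Fin (r+1))) : K F r → K F r :=
  if h : ∃ l : List ℕ, (∀ i ∈ l, i < r) ∧ l.length = plen r u ∧ wordProd r l = u
  then DWord S h.choose else id

/-- `T_u` for `u ∈ W`, via a chosen reduced word for `u`. -/
def Tperm (S : Setup F r n v g) (u : Equiv.Perm (Fin (r+1))) : K F r → K F r :=
  if h : ∃ l : List ℕ, (∀ i ∈ l, i < r) ∧ l.length = plen r u ∧ wordProd r l = u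
  then TWord S h.choose else id

variable (F r n v g)

/-- `a : ℕ → ℕ → ℤ` encodes a Gelfand–Tsetlin pattern of rank `m`
(entries `a i j`, `0 ≤ i ≤ j ≤ m`, zero outside this triangle). -/
def IsGT (m : ℕ) (a : ℕ → ℕ → ℤ) : Prop :=
  (∀ i j, (j < i ∨ m < j) → a i j = 0) ∧
  (∀ i j, i ≤ j → j ≤ m → 0 ≤ a i j) ∧
  (∀ i j, 1 ≤ i → i ≤ j → j ≤ m → a i j ≤ a (i-1) (j-1) ∧ a (i-1) j ≤ a i j)

/-- `d_i`, the sum of the `i`-th row of a pattern. -/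
def rowSum (m : ℕ) (a : ℕ → ℕ → ℤ) (i : ℕ) : ℤ := ∑ j ∈ Finset.Icc i m, a i j

/-- The `p`-th coordinate (0-indexed) of the weight `wt(T) = (d_m, d_{m-1}-d_m, …, d_0-d_1)`. -/
def wtN (m : ℕ) (a : ℕ → ℕ → ℤ) (p : ℕ) : ℤ := rowSum m a (m - p) - rowSum m a (m - p + 1)

/-- The Γ-array of a pattern: `Γ_{i,j} = Σ_{k=j}^{m} (a_{i,k} - a_{i-1,k})`. -/
def GammaArr (m : ℕ) (a : ℕ → ℕ → ℤ) (i j : ℕ) : ℤ :=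
  ∑ k ∈ Finset.Icc j m, (a i k - a (i-1) k)

/-- `h♭(a) = 1 - v` if `n ∣ a`, else `0`. -/
def hflat (a : ℤ) : F := if (n : ℤ) ∣ a then 1 - v else 0

/-- `g♭(a) = v · g_a`. -/
def gflat (a : ℤ) : F := v * g a

/-- The factor `g_{ij}(T)` of the degree-`n` Gelfand–Tsetlin coefficient. -/
def gcoefP (m : ℕ) (a : ℕ → ℕ → ℤ) (i j : ℕ) : F :=
  if GammaArr m a i (j+1) = GammaArr m a i j ∧
      GammaArr m a i j < GammaArr m a i (j+1) + a (i-1) (j-1) - a (i-1) j then 1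
  else if GammaArr m a i (j+1) < GammaArr m a i j ∧
      GammaArr m a i j < GammaArr m a i (j+1) + a (i-1) (j-1) - a (i-1) j then
    hflat F n v (GammaArr m a i j)
  else if GammaArr m a i (j+1) < GammaArr m a i j ∧
      GammaArr m a i j = GammaArr m a i (j+1) + a (i-1) (j-1) - a (i-1) j then
    gflat F v g (GammaArr m a i j)
  else 0

/-- The degree-`n` Gelfand–Tsetlin coefficient `G^{(n)}(T)`. -/
def Gcoef (m : ℕ) (a : ℕ → ℕ → ℤ) : F :=
  ∏ i ∈ Finset.Icc 1 m, ∏ j ∈ Finset.Icc i m, gcoefP F n v g m a i j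

/-- `Γ = (Γ_1, …, Γ_m)` (1-indexed, zero outside) is `ν`-admissible. -/
def IsAdm (m : ℕ) (ν Γ : ℕ → ℤ) : Prop :=
  (∀ j, j = 0 ∨ m < j → Γ j = 0) ∧
  ∀ j, 1 ≤ j → j ≤ m → Γ (j+1) ≤ Γ j ∧ Γ j ≤ Γ (j+1) + ν j - ν (j+1) + 1

/-- `Γ` is `(ν,k)`-admissible. -/
def IsAdmK (m k : ℕ) (ν Γ : ℕ → ℤ) : Prop := IsAdm m ν Γ ∧ ∀ j, k + 1 < j → Γ j = 0

/-- The `p`-th coordinate (0-indexed) of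
`wt^{(ν)}(Γ) = (ν_{m+1}+Γ_m, ν_m+Γ_{m-1}-Γ_m, …, ν_1-Γ_1)`. -/
def wtGam (m : ℕ) (ν Γ : ℕ → ℤ) (p : ℕ) : ℤ := ν (m+1-p) + Γ (m-p) - Γ (m-p+1)

/-- The factor `c_j` of `G_1^{(ν)}(Γ)`. -/
def gamCoef (ν Γ : ℕ → ℤ) (j : ℕ) : F :=
  if Γ (j+1) = Γ j ∧ Γ j < Γ (j+1) + ν j - ν (j+1) + 1 then 1
  else if Γ (j+1) < Γ j ∧ Γ j < Γ (j+1) + ν j - ν (j+1) + 1 then hflat F n v (Γ j)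
  else if Γ (j+1) < Γ j ∧ Γ j = Γ (j+1) + ν j - ν (j+1) + 1 then gflat F v g (Γ j)
  else 0

/-- `G_1^{(ν)}(Γ)`. -/
def G1 (m : ℕ) (ν Γ : ℕ → ℤ) : F := ∏ j ∈ Finset.Icc 1 m, gamCoef F n v g ν Γ j

/-- The top row `λ + ρ` of a pattern, as a function `ℕ → ℤ` (0-indexed columns). -/
def topRowOf (lam : Fin (r+1) → ℤ) : ℕ → ℤ :=
  fun j => if h : j ≤ r then lam ⟨j, by omega⟩ + ((r : ℤ) - (j : ℤ)) else 0

/-- The weight `λ` reread as a 1-indexed function `ℕ → ℤ` (`ν_j = λ_j`). -/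
def nuOf (lam : Fin (r+1) → ℤ) : ℕ → ℤ :=
  fun j => if h : 1 ≤ j ∧ j ≤ r + 1 then lam ⟨j - 1, by omega⟩ else 0

/-- Dominance: `λ_1 ≥ λ_2 ≥ … `. -/
def Dominant (m : ℕ) (lam : Fin m → ℤ) : Prop := ∀ i j : Fin m, i ≤ j → lam j ≤ lam i

/-- Position of `Γ_{i,j}` in the reading `b_1, b_2, …` of the Γ-array
(rows bottom to top, each row left to right). -/
def bpos (m i j : ℕ) : ℕ := (m - i) * (m - i + 1) / 2 + (j - i + 1)


/-- `δ(A,B) = h♭(A)` if `A < B`, `h♭(A) - 1` if `A = B`, `0` if `A > B`. -/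
def deltaHG (A B : ℤ) : F :=
  if A < B then hflat F n v A else if A = B then hflat F n v A - 1 else 0


def dropTopRow (a : ℕ → ℕ → ℤ) : ℕ → ℕ → ℤ := fun i j => a (i + 1) (j + 1)

def firstRowCoef (m : ℕ) (a : ℕ → ℕ → ℤ) : F :=
  ∏ j ∈ Finset.Icc 1 m, gcoefP F n v g m a 1 j

section Branching

variable {F n v g} {m : ℕ} {a b : ℕ → ℕ → ℤ}

@[to_additive]
lemma prod_Icc_succ_succ {M : Type*} [CommMonoid M] (f : ℕ → M) (c d : ℕ) :
    ∏ k ∈ Finset.Icc (c + 1) (d + 1), f k = ∏ k ∈ Finset.Icc c d, f (k + 1) := by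
  rw [← Finset.map_add_right_Icc, Finset.prod_map]
  rfl

lemma IsGT.dropTopRow (ha : IsGT (m + 1) a) : IsGT m (dropTopRow a) := by
  obtain ⟨hzero, hnonneg, hinter⟩ := ha
  refine ⟨fun i j h => hzero _ _ (by omega), fun i j hij hj => hnonneg _ _ (by omega) (by omega),
    fun i j hi hij hj => ?_⟩
  obtain ⟨i, rfl⟩ : ∃ k, i = k + 1 := ⟨i - 1, by omega⟩
  obtain ⟨j, rfl⟩ : ∃ k, j = k + 1 := ⟨j - 1, by omega⟩
  exact hinter (i + 2) (j + 2) (by omega) (by omega) (by omega)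

lemma IsGT.apply_succ_le (ha : IsGT m a) {i j : ℕ} (hi : 1 ≤ i) (hij : i ≤ j)
    (hj : j + 1 ≤ m) : a i (j + 1) ≤ a i j :=
  (ha.2.2 i (j + 1) hi (by omega) hj).1.trans (ha.2.2 i j hi hij (by omega)).2

lemma rowSum_dropTopRow (i : ℕ) : rowSum m (dropTopRow a) i = rowSum (m + 1) a (i + 1) := by
  rw [rowSum, rowSum, sum_Icc_succ_succ]
  rfl

lemma wtN_dropTopRow {p : ℕ} (hp : p ≤ m) : wtN m (dropTopRow a) p = wtN (m + 1) a p := by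
  simp only [wtN, rowSum_dropTopRow, show m + 1 - p = m - p + 1 by omega]

lemma GammaArr_dropTopRow {i : ℕ} (hi : 1 ≤ i) (j : ℕ) :
    GammaArr m (dropTopRow a) i j = GammaArr (m + 1) a (i + 1) (j + 1) := by
  obtain ⟨i, rfl⟩ : ∃ k, i = k + 1 := ⟨i - 1, by omega⟩
  rw [GammaArr, GammaArr, sum_Icc_succ_succ]
  rfl

lemma GammaArr_eq_add {i j : ℕ} (hj : j ≤ m) :
    GammaArr m a i j = GammaArr m a i (j + 1) + (a i j - a (i - 1) j) := by
  rw [GammaArr, GammaArr, ← Finset.insert_Icc_add_one_left_eq_Icc hj,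
    Finset.sum_insert (by simp), add_comm]

lemma gcoefP_dropTopRow {i j : ℕ} (hi : 1 ≤ i) (hj : 1 ≤ j) :
    gcoefP F n v g m (dropTopRow a) i j = gcoefP F n v g (m + 1) a (i + 1) (j + 1) := by
  obtain ⟨i, rfl⟩ : ∃ k, i = k + 1 := ⟨i - 1, by omega⟩
  obtain ⟨j, rfl⟩ : ∃ k, j = k + 1 := ⟨j - 1, by omega⟩
  simp only [gcoefP, GammaArr_dropTopRow hi]
  rfl

lemma Gcoef_succ (a : ℕ → ℕ → ℤ) :
    Gcoef F n v g (m + 1) a =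
      firstRowCoef F n v g (m + 1) a * Gcoef F n v g m (dropTopRow a) := by
  rw [Gcoef, ← Finset.insert_Icc_add_one_left_eq_Icc (by omega : 1 ≤ m + 1),
    Finset.prod_insert (by simp), prod_Icc_succ_succ _ 1 m, firstRowCoef, Gcoef]
  congr 1
  refine Finset.prod_congr rfl fun i hi => ?_
  rw [prod_Icc_succ_succ]
  exact Finset.prod_congr rfl fun j hj =>
    (gcoefP_dropTopRow (Finset.mem_Icc.1 hi).1 ((Finset.mem_Icc.1 hi).1.trans
      (Finset.mem_Icc.1 hj).1)).symm

lemma firstRowCoef_congr (h0 : ∀ k, a 0 k = b 0 k)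
    (h1 : ∀ k, 1 ≤ k → k ≤ m → a 1 k = b 1 k) : firstRowCoef F n v g m a = firstRowCoef F n v g m b := by
  have hΓ : ∀ j, 1 ≤ j → GammaArr m a 1 j = GammaArr m b 1 j := fun j hj =>
    Finset.sum_congr rfl fun k hk => by
      rw [Finset.mem_Icc] at hk
      rw [h1 k (by omega) hk.2, Nat.sub_self, h0]
  refine Finset.prod_congr rfl fun j hj => ?_
  rw [Finset.mem_Icc] at hj
  simp only [gcoefP, hΓ j hj.1, hΓ (j + 1) (by omega), Nat.sub_self, h0]

lemma gcoefP_eq_zero_of_eq {i j : ℕ} (hj : j ≤ m) (hrep : a (i - 1) (j - 1) = a (i - 1) j)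
    (hle : a i j ≤ a (i - 1) (j - 1)) (hge : a (i - 1) j ≤ a i j) :
    gcoefP F n v g m a i j = 0 := by
  have hΓ := GammaArr_eq_add (a := a) (i := i) hj
  rw [gcoefP, if_neg (by omega), if_neg (by omega), if_neg (by omega)]

lemma Gcoef_eq_zero_of_eq (ha : IsGT m a) {i j : ℕ} (hi : 1 ≤ i) (hij : i ≤ j) (hj : j ≤ m)
    (hrep : a (i - 1) (j - 1) = a (i - 1) j) : Gcoef F n v g m a = 0 :=
  Finset.prod_eq_zero (Finset.mem_Icc.2 ⟨hi, hij.trans hj⟩) <|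
    Finset.prod_eq_zero (Finset.mem_Icc.2 ⟨hij, hj⟩) <|
      gcoefP_eq_zero_of_eq hj hrep (ha.2.2 i j hi hij hj).1 (ha.2.2 i j hi hij hj).2

lemma Gcoef_eq_one_of_rows_eq (hrows : ∀ i j, i ≤ j → j ≤ m → a i j = a 0 j)
    (hstrict : ∀ j, j < m → a 0 (j + 1) < a 0 j) : Gcoef F n v g m a = 1 := by
  have hΓ : ∀ i j, 1 ≤ i → i ≤ j → GammaArr m a i j = 0 := fun i j hi hij =>
    Finset.sum_eq_zero fun k hk => by
      rw [Finset.mem_Icc] at hk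
      rw [hrows i k (by omega) hk.2, hrows (i - 1) k (by omega) hk.2, sub_self]
  refine Finset.prod_eq_one fun i hi => Finset.prod_eq_one fun j hj => ?_
  rw [Finset.mem_Icc] at hi hj
  have hlt := hstrict (j - 1) (by omega)
  rw [Nat.sub_add_cancel (by omega)] at hlt
  rw [gcoefP, hΓ i j hi.1 hj.1, hΓ i (j + 1) hi.1 (by omega),
    hrows (i - 1) (j - 1) (by omega) (by omega), hrows (i - 1) j (by omega) hj.2,
    if_pos ⟨rfl, by omega⟩]

end Branching

theorem statement11_general (r n : ℕ) (hr : 1 ≤ r) (v : ℂ) (g : ℤ → ℂ)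
    (lam : Fin (r+1) → ℤ)
    (μ : ℕ → ℤ)
    (T : ℕ → ℕ → ℤ) (hT : IsGT r T)
    (htop : ∀ j, T 0 j = topRowOf r lam j)
    (hsec : ∀ j, 1 ≤ j → j ≤ r → T 1 j = μ j)
    (T' : ℕ → ℕ → ℤ) (hT' : ∀ i j, T' i j = T (i+1) (j+1))
    (Tstar : ℕ → ℕ → ℤ)
    (hstar : ∀ i j, Tstar i j =
      if i = 0 then topRowOf r lam j
      else if 1 ≤ i ∧ i ≤ j ∧ j ≤ r then μ j else 0) :
    ((∀ p : ℕ, p ≤ r - 1 → wtN r T p = wtN (r-1) T' p) ∧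
      wtN r T r
        = (∑ j ∈ Finset.range (r+1), topRowOf r lam j) - ∑ j ∈ Finset.Icc 1 r, μ j) ∧
    Gcoef ℂ n v g r T = Gcoef ℂ n v g (r-1) T' * Gcoef ℂ n v g r Tstar := by
  obtain ⟨m, rfl⟩ : ∃ m, r = m + 1 := ⟨r - 1, by omega⟩
  obtain rfl : T' = dropTopRow T := funext₂ hT'
  simp only [Nat.add_sub_cancel]
  refine ⟨⟨fun p hp => (wtN_dropTopRow hp).symm, ?_⟩, ?_⟩
  · simp only [wtN, rowSum, Nat.sub_self, zero_add, ← Nat.range_succ_eq_Icc_zero]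
    rw [Finset.sum_congr rfl fun j _ => htop j,
      Finset.sum_congr rfl fun j hj => hsec j (Finset.mem_Icc.1 hj).1 (Finset.mem_Icc.1 hj).2]
  have hstar_lower : ∀ i j, 1 ≤ i → i ≤ j → j ≤ m + 1 → Tstar i j = μ j :=
    fun i j hi hij hj => by rw [hstar, if_neg (by omega), if_pos ⟨hi, hij, hj⟩]
  rw [Gcoef_succ, Gcoef_succ (a := Tstar), firstRowCoef_congr (a := Tstar) (b := T)
    (fun k => by rw [hstar, if_pos rfl, htop])
    (fun k hk hkm => by rw [hstar_lower 1 k le_rfl hk hkm, hsec k hk hkm])]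
  by_cases hdeg : ∃ j < m, μ (j + 2) = μ (j + 1)
  · obtain ⟨j, hjm, heq⟩ := hdeg
    rw [Gcoef_eq_zero_of_eq hT.dropTopRow (i := 1) (j := j + 1) le_rfl (by omega) hjm
      (show T 1 (j + 1) = T 1 (j + 2) by
        rw [hsec _ (by omega) (by omega), hsec _ (by omega) (by omega), heq]),
      zero_mul, mul_zero]
  · push Not at hdeg
    rw [Gcoef_eq_one_of_rows_eq (a := dropTopRow Tstar), mul_one, mul_comm]
    · intro i j hij hj
      simp only [dropTopRow, hstar_lower (i + 1) (j + 1) (by omega) (by omega) (by omega),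
        hstar_lower 1 (j + 1) le_rfl (by omega) (by omega)]
    · intro j hj
      simp only [dropTopRow, hstar_lower 1 (j + 1) le_rfl (by omega) (by omega),
        hstar_lower 1 (j + 2) le_rfl (by omega) (by omega)]
      have hle := hT.apply_succ_le le_rfl (by omega : 1 ≤ j + 1) (by omega : j + 1 + 1 ≤ m + 1)
      rw [hsec _ (by omega) (by omega), hsec _ (by omega) (by omega)] at hle
      exact lt_of_le_of_ne hle (hdeg j hj)

/-- branching of weights and Gelfand–Tsetlin coefficients:
for a pattern `T` with top row `λ+ρ` and second row `μ`, deleting the top row gives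
`T'` and the "lowest" pattern `T*` has all lower rows equal to `μ`; then
`wt(T) = (wt(T'), d(λ+ρ) - d(μ))` and `G^{(n)}(T) = G^{(n)}(T') · G^{(n)}(T*)`. -/
theorem statement11 (r n : ℕ) (hr : 1 ≤ r) (hn : 1 ≤ n) (v : ℂ) (g : ℤ → ℂ)
    (hv : v ≠ 0)
    (hgper : ∀ i j : ℤ, i % (n : ℤ) = j % (n : ℤ) → g i = g j)
    (hg0 : g 0 = -1)
    (hginv : ∀ i : ℤ, 1 ≤ i → i ≤ (n : ℤ) - 1 → g i * g ((n : ℤ) - i) = v⁻¹)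
    (lam : Fin (r+1) → ℤ) (hdom : Dominant (r+1) lam) (heff : 0 ≤ lam (Fin.last r))
    (μ : ℕ → ℤ)
    (hint : ∀ j : ℕ, 1 ≤ j → j ≤ r → topRowOf r lam j ≤ μ j ∧ μ j ≤ topRowOf r lam (j-1))
    (T : ℕ → ℕ → ℤ) (hT : IsGT r T)
    (htop : ∀ j, T 0 j = topRowOf r lam j)
    (hsec : ∀ j, 1 ≤ j → j ≤ r → T 1 j = μ j)
    (T' : ℕ → ℕ → ℤ) (hT' : ∀ i j, T' i j = T (i+1) (j+1))
    (Tstar : ℕ → ℕ → ℤ)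
    (hstar : ∀ i j, Tstar i j =
      if i = 0 then topRowOf r lam j
      else if 1 ≤ i ∧ i ≤ j ∧ j ≤ r then μ j else 0) :
    ((∀ p : ℕ, p ≤ r - 1 → wtN r T p = wtN (r-1) T' p) ∧
      wtN r T r
        = (∑ j ∈ Finset.range (r+1), topRowOf r lam j) - ∑ j ∈ Finset.Icc 1 r, μ j) ∧
    Gcoef ℂ n v g r T = Gcoef ℂ n v g (r-1) T' * Gcoef ℂ n v g r Tstar :=
  statement11_general r n hr v g lam μ T hT htop hsec T' hT' Tstar hstar

end MetaPaper
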